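/- Let v ∈ ℂ^6 be a hexagon whose Fourier coefficients satisfy ξ_0 = ξ_3 = 0, and let n be a natural number such that |ξ_1|² − |ξ_5|² + 3^{−n}·(|ξ_2|² − |ξ_4|²) ≠ 0. Then G(M^n v) = (1/2^n) · ( 9√3·( |ξ_1|² − |ξ_5|² + 3^{−n}·(|ξ_2|² − |ξ_4|²) ) )^{−1} · Z(v). -/

import Mathlib

open Complex

noncomputable section

/-- `ω = exp(2πi/6)`, a primitive sixth root of unity. -/
def ω6 : ℂ := Complex.exp (2 * Real.pi * Complex.I / 6)

/-- Fourier coefficients of a hexagon: `ξ_j = (1/6) ∑_k v_k ω^{-jk}`. -/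
def ξ6 (v : Fin 6 → ℂ) (j : Fin 6) : ℂ :=
  (1 / 6) * ∑ k : Fin 6, v k * ω6 ^ (-((j : ℤ) * (k : ℤ)))

/-- The midpoint map on hexagons: `(Mv)_k = (v_k + v_{k+1})/2`, indices mod 6. -/
def M6 (v : Fin 6 → ℂ) : Fin 6 → ℂ := fun k => (v k + v (k + 1)) / 2

/-- Signed area of a hexagon. -/
def A6 (v : Fin 6 → ℂ) : ℝ := (1 / 2) * ∑ k : Fin 6, ((starRingEnd ℂ) (v k) * v (k + 1)).im

/-- The quantity `Z(v) = ∑ (v_k + v_{k+1})·Im(conj(v_k)·v_{k+1})`. -/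
def Z6 (v : Fin 6 → ℂ) : ℂ :=
  ∑ k : Fin 6, (v k + v (k + 1)) * (((starRingEnd ℂ) (v k) * v (k + 1)).im : ℂ)

/-- The centroid `G(v) = Z(v)/(6·A(v))`. -/
def G6 (v : Fin 6 → ℂ) : ℂ := Z6 v / (6 * (A6 v : ℂ))


-- ## Auxiliary machinery

lemma ω6_ne : ω6 ≠ 0 := Complex.exp_ne_zero _

lemma ω6_val : ω6 = (1 + (Real.sqrt 3 : ℝ) * Complex.I) / 2 := by
  have h : (2 * Real.pi * Complex.I / 6) = (Real.pi/3 : ℝ) * Complex.I := by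
    push_cast; ring
  rw [ω6, h, Complex.exp_mul_I]
  rw [← Complex.ofReal_cos, ← Complex.ofReal_sin, Real.cos_pi_div_three, Real.sin_pi_div_three]
  push_cast; ring

lemma ω6_pow6 : ω6 ^ (6:ℕ) = 1 := by
  rw [ω6, ← Complex.exp_nat_mul]
  rw [show ((6:ℕ):ℂ) * (2 * Real.pi * Complex.I / 6) = 2 * Real.pi * Complex.I by push_cast; ring]
  exact Complex.exp_two_pi_mul_I

lemma ω6_zpow (m : ℤ) : ω6 ^ m = ω6 ^ (m % 6).toNat := by
  have h1 : ω6 ^ (6:ℤ) = 1 := by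
    rw [show (6:ℤ) = ((6:ℕ):ℤ) by norm_num, zpow_natCast]; exact ω6_pow6
  calc ω6 ^ m = ω6 ^ (6 * (m / 6) + m % 6) := by rw [Int.mul_ediv_add_emod]
    _ = (ω6 ^ (6:ℤ)) ^ (m / 6) * ω6 ^ (m % 6) := by rw [zpow_add₀ ω6_ne, zpow_mul]
    _ = ω6 ^ (m % 6) := by rw [h1, one_zpow, one_mul]
    _ = ω6 ^ (m % 6).toNat := by
        rw [← zpow_natCast, Int.toNat_of_nonneg (Int.emod_nonneg m (by norm_num))]

lemma hs3 : (((Real.sqrt 3 : ℝ)) : ℂ)^2 = 3 := by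
  rw [← Complex.ofReal_pow, Real.sq_sqrt (by norm_num : (3:ℝ) ≥ 0)]
  norm_num

lemma W2 : ω6^(2:ℕ) = (-1 + ((Real.sqrt 3 : ℝ) : ℂ) * Complex.I) / 2 := by
  rw [ω6_val]
  linear_combination (-1/4 : ℂ) * hs3 + ((1/4 : ℂ) * ((Real.sqrt 3 : ℝ) : ℂ)^2) * Complex.I_sq

lemma W3 : ω6^(3:ℕ) = -1 := by
  rw [ω6_val]
  linear_combination ((-3/8 : ℂ) + (-1/8 : ℂ) * ((Real.sqrt 3 : ℝ) : ℂ) * Complex.I) * hs3 + ((3/8 : ℂ) * ((Real.sqrt 3 : ℝ) : ℂ)^2 + (1/8 : ℂ) * ((Real.sqrt 3 : ℝ) : ℂ)^3 * Complex.I) * Complex.I_sq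

lemma W4 : ω6^(4:ℕ) = (-1 - ((Real.sqrt 3 : ℝ) : ℂ) * Complex.I) / 2 := by
  rw [ω6_val]
  linear_combination ((-3/16 : ℂ) + (-1/4 : ℂ) * ((Real.sqrt 3 : ℝ) : ℂ) * Complex.I + (1/16 : ℂ) * ((Real.sqrt 3 : ℝ) : ℂ)^2) * hs3 + ((3/8 : ℂ) * ((Real.sqrt 3 : ℝ) : ℂ)^2 + (1/4 : ℂ) * ((Real.sqrt 3 : ℝ) : ℂ)^3 * Complex.I + (-1/16 : ℂ) * ((Real.sqrt 3 : ℝ) : ℂ)^4 + (1/16 : ℂ) * ((Real.sqrt 3 : ℝ) : ℂ)^4 * Complex.I^2) * Complex.I_sq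

lemma W5 : ω6^(5:ℕ) = (1 - ((Real.sqrt 3 : ℝ) : ℂ) * Complex.I) / 2 := by
  rw [ω6_val]
  linear_combination ((5/32 : ℂ) + (-7/32 : ℂ) * ((Real.sqrt 3 : ℝ) : ℂ) * Complex.I + (5/32 : ℂ) * ((Real.sqrt 3 : ℝ) : ℂ)^2 + (1/32 : ℂ) * ((Real.sqrt 3 : ℝ) : ℂ)^3 * Complex.I) * hs3 + ((5/16 : ℂ) * ((Real.sqrt 3 : ℝ) : ℂ)^2 + (5/16 : ℂ) * ((Real.sqrt 3 : ℝ) : ℂ)^3 * Complex.I + (-5/32 : ℂ) * ((Real.sqrt 3 : ℝ) : ℂ)^4 + (5/32 : ℂ) * ((Real.sqrt 3 : ℝ) : ℂ)^4 * Complex.I^2 + (-1/32 : ℂ) * ((Real.sqrt 3 : ℝ) : ℂ)^5 * Complex.I + (1/32 : ℂ) * ((Real.sqrt 3 : ℝ) : ℂ)^5 * Complex.I^3) * Complex.I_sq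

lemma xi0_val (v : Fin 6 → ℂ) :
    ξ6 v 0 = (1/6) * (v 0 + v 1 + v 2 + v 3 + v 4 + v 5) := by
  have h : ξ6 v 0 = (1/6) * (v 0 * ω6^(0:ℕ) + v 1 * ω6^(0:ℕ) + v 2 * ω6^(0:ℕ)
      + v 3 * ω6^(0:ℕ) + v 4 * ω6^(0:ℕ) + v 5 * ω6^(0:ℕ)) := by
    rw [ξ6, Fin.sum_univ_six]; simp only [ω6_zpow]; rfl
  rw [h]; simp only [pow_zero, mul_one]

lemma xi3_val (v : Fin 6 → ℂ) :
    ξ6 v 3 = (1/6) * (v 0 - v 1 + v 2 - v 3 + v 4 - v 5) := by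
  have h : ξ6 v 3 = (1/6) * (v 0 * ω6^(0:ℕ) + v 1 * ω6^(3:ℕ) + v 2 * ω6^(0:ℕ)
      + v 3 * ω6^(3:ℕ) + v 4 * ω6^(0:ℕ) + v 5 * ω6^(3:ℕ)) := by
    rw [ξ6, Fin.sum_univ_six]; simp only [ω6_zpow]; rfl
  rw [h, W3]; ring

lemma xi1_val (v : Fin 6 → ℂ) :
    ξ6 v 1 = (1/6) * (v 0 + v 1 * ((1 - ((Real.sqrt 3 : ℝ) : ℂ) * Complex.I) / 2)
      + v 2 * ((-1 - ((Real.sqrt 3 : ℝ) : ℂ) * Complex.I) / 2) + v 3 * (-1)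
      + v 4 * ((-1 + ((Real.sqrt 3 : ℝ) : ℂ) * Complex.I) / 2)
      + v 5 * ((1 + ((Real.sqrt 3 : ℝ) : ℂ) * Complex.I) / 2)) := by
  have h : ξ6 v 1 = (1/6) * (v 0 * ω6^(0:ℕ) + v 1 * ω6^(5:ℕ) + v 2 * ω6^(4:ℕ)
      + v 3 * ω6^(3:ℕ) + v 4 * ω6^(2:ℕ) + v 5 * ω6^(1:ℕ)) := by
    rw [ξ6, Fin.sum_univ_six]; simp only [ω6_zpow]; rfl
  rw [h, W5, W4, W3, W2, pow_zero, pow_one, ω6_val]; ring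

lemma xi5_val (v : Fin 6 → ℂ) :
    ξ6 v 5 = (1/6) * (v 0 + v 1 * ((1 + ((Real.sqrt 3 : ℝ) : ℂ) * Complex.I) / 2)
      + v 2 * ((-1 + ((Real.sqrt 3 : ℝ) : ℂ) * Complex.I) / 2) + v 3 * (-1)
      + v 4 * ((-1 - ((Real.sqrt 3 : ℝ) : ℂ) * Complex.I) / 2)
      + v 5 * ((1 - ((Real.sqrt 3 : ℝ) : ℂ) * Complex.I) / 2)) := by
  have h : ξ6 v 5 = (1/6) * (v 0 * ω6^(0:ℕ) + v 1 * ω6^(1:ℕ) + v 2 * ω6^(2:ℕ)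
      + v 3 * ω6^(3:ℕ) + v 4 * ω6^(4:ℕ) + v 5 * ω6^(5:ℕ)) := by
    rw [ξ6, Fin.sum_univ_six]; simp only [ω6_zpow]; rfl
  rw [h, W5, W4, W3, W2, pow_zero, pow_one, ω6_val]; ring

lemma xi2_val (v : Fin 6 → ℂ) :
    ξ6 v 2 = (1/6) * (v 0 + v 1 * ((-1 - ((Real.sqrt 3 : ℝ) : ℂ) * Complex.I) / 2)
      + v 2 * ((-1 + ((Real.sqrt 3 : ℝ) : ℂ) * Complex.I) / 2) + v 3 * 1
      + v 4 * ((-1 - ((Real.sqrt 3 : ℝ) : ℂ) * Complex.I) / 2)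
      + v 5 * ((-1 + ((Real.sqrt 3 : ℝ) : ℂ) * Complex.I) / 2)) := by
  have h : ξ6 v 2 = (1/6) * (v 0 * ω6^(0:ℕ) + v 1 * ω6^(4:ℕ) + v 2 * ω6^(2:ℕ)
      + v 3 * ω6^(0:ℕ) + v 4 * ω6^(4:ℕ) + v 5 * ω6^(2:ℕ)) := by
    rw [ξ6, Fin.sum_univ_six]; simp only [ω6_zpow]; rfl
  rw [h, W4, W2, pow_zero]; ring

lemma xi4_val (v : Fin 6 → ℂ) :
    ξ6 v 4 = (1/6) * (v 0 + v 1 * ((-1 + ((Real.sqrt 3 : ℝ) : ℂ) * Complex.I) / 2)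
      + v 2 * ((-1 - ((Real.sqrt 3 : ℝ) : ℂ) * Complex.I) / 2) + v 3 * 1
      + v 4 * ((-1 + ((Real.sqrt 3 : ℝ) : ℂ) * Complex.I) / 2)
      + v 5 * ((-1 - ((Real.sqrt 3 : ℝ) : ℂ) * Complex.I) / 2)) := by
  have h : ξ6 v 4 = (1/6) * (v 0 * ω6^(0:ℕ) + v 1 * ω6^(2:ℕ) + v 2 * ω6^(4:ℕ)
      + v 3 * ω6^(0:ℕ) + v 4 * ω6^(2:ℕ) + v 5 * ω6^(4:ℕ)) := by
    rw [ξ6, Fin.sum_univ_six]; simp only [ω6_zpow]; rfl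
  rw [h, W4, W2, pow_zero]; ring

/-- `T1 v = Im ∑ conj(v_k) v_{k+1}`. -/
def T16 (v : Fin 6 → ℂ) : ℝ := ∑ k : Fin 6, ((starRingEnd ℂ) (v k) * v (k + 1)).im

/-- `T2 v = Im ∑ conj(v_k) v_{k+2}`. -/
def T26 (v : Fin 6 → ℂ) : ℝ := ∑ k : Fin 6, ((starRingEnd ℂ) (v k) * v (k + 2)).im

lemma him (z : ℂ) : ((z.im : ℝ) : ℂ) = (z - (starRingEnd ℂ) z) * (-(Complex.I/2)) := by
  have h := Complex.sub_conj z
  rw [h]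
  field_simp
  ring_nf
  rw [Complex.I_sq]
  ring
  push_cast; ring

lemma T1_step (v : Fin 6 → ℂ) : T16 (M6 v) = (2 * T16 v + T26 v) / 4 := by
  have key : ((T16 (M6 v) : ℝ) : ℂ) = (((2 * T16 v + T26 v) / 4 : ℝ) : ℂ) := by
    rw [T16, T16, T26, Fin.sum_univ_six, Fin.sum_univ_six, Fin.sum_univ_six]
    push_cast [him, M6]
    simp only [Fin.reduceAdd, map_add, map_div₀, map_mul, map_ofNat, Complex.conj_conj]
    ring
  exact_mod_cast key

lemma T2_step (v : Fin 6 → ℂ) : T26 (M6 v) = (T16 v + 2 * T26 v) / 4 := by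
  have key : ((T26 (M6 v) : ℝ) : ℂ) = (((T16 v + 2 * T26 v) / 4 : ℝ) : ℂ) := by
    rw [T26, T16, T26, Fin.sum_univ_six, Fin.sum_univ_six, Fin.sum_univ_six]
    push_cast [him, M6]
    simp only [Fin.reduceAdd, map_add, map_div₀, map_mul, map_ofNat, Complex.conj_conj]
    ring
  exact_mod_cast key

lemma Z_step (v : Fin 6 → ℂ) (h4 : v 4 = -v 0 - v 2) (h5 : v 5 = -v 1 - v 3) :
    Z6 (M6 v) = 3/8 * Z6 v := by
  rw [Z6, Z6, Fin.sum_univ_six, Fin.sum_univ_six]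
  push_cast [him, M6]
  simp only [Fin.reduceAdd, h4, h5, map_add, map_sub, map_neg, map_div₀, map_mul,
    map_ofNat, Complex.conj_conj]
  ring

lemma c4_step (v : Fin 6 → ℂ) (h4 : v 4 = -v 0 - v 2) (h5 : v 5 = -v 1 - v 3) :
    M6 v 4 = -(M6 v 0) - M6 v 2 := by
  simp only [M6, Fin.reduceAdd, h4, h5]; ring

lemma c5_step (v : Fin 6 → ℂ) (h4 : v 4 = -v 0 - v 2) (h5 : v 5 = -v 1 - v 3) :
    M6 v 5 = -(M6 v 1) - M6 v 3 := by
  simp only [M6, Fin.reduceAdd, h4, h5]; ring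

lemma habs (z : ℂ) : ((‖z‖ ^ 2 : ℝ) : ℂ) = z * (starRingEnd ℂ) z := by
  rw [Complex.sq_norm]; exact (Complex.mul_conj z).symm

lemma bridge1 (v : Fin 6 → ℂ) :
    6 * Real.sqrt 3 * (‖(ξ6 v 1)‖ ^ 2 - ‖(ξ6 v 5)‖ ^ 2)
      = T16 v + T26 v := by
  apply Complex.ofReal_injective
  rw [show ((6 * Real.sqrt 3 * (‖(ξ6 v 1)‖ ^ 2 - ‖(ξ6 v 5)‖ ^ 2) : ℝ) : ℂ)
      = 6 * ((Real.sqrt 3 : ℝ) : ℂ) * ((ξ6 v 1) * (starRingEnd ℂ) (ξ6 v 1)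
        - (ξ6 v 5) * (starRingEnd ℂ) (ξ6 v 5)) from by
    rw [Complex.ofReal_mul, Complex.ofReal_mul, Complex.ofReal_sub, habs, habs]; norm_num]
  rw [Complex.ofReal_add, T16, T26, Fin.sum_univ_six, Fin.sum_univ_six]
  push_cast [him]
  rw [xi1_val, xi5_val]
  simp only [Fin.reduceAdd, map_add, map_sub, map_neg, map_div₀, map_mul, map_one,
    map_ofNat, Complex.conj_conj, Complex.conj_I, Complex.conj_ofReal]
  linear_combination ((-1/6 : ℂ) * v 5 * (starRingEnd ℂ) (v 4) * Complex.I + (-1/6 : ℂ) * v 5 * (starRingEnd ℂ) (v 3) * Complex.I + (1/6 : ℂ) * v 5 * (starRingEnd ℂ) (v 1) * Complex.I + (1/6 : ℂ) * v 5 * (starRingEnd ℂ) (v 0) * Complex.I + (1/6 : ℂ) * v 4 * (starRingEnd ℂ) (v 5) * Complex.I + (-1/6 : ℂ) * v 4 * (starRingEnd ℂ) (v 3) * Complex.I + (-1/6 : ℂ) * v 4 * (starRingEnd ℂ) (v 2) * Complex.I + (1/6 : ℂ) * v 4 * (starRingEnd ℂ) (v 0) * Complex.I + (1/6 : ℂ)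 * v 3 * (starRingEnd ℂ) (v 5) * Complex.I + (1/6 : ℂ) * v 3 * (starRingEnd ℂ) (v 4) * Complex.I + (-1/6 : ℂ) * v 3 * (starRingEnd ℂ) (v 2) * Complex.I + (-1/6 : ℂ) * v 3 * (starRingEnd ℂ) (v 1) * Complex.I + (1/6 : ℂ) * v 2 * (starRingEnd ℂ) (v 4) * Complex.I + (1/6 : ℂ) * v 2 * (starRingEnd ℂ) (v 3) * Complex.I + (-1/6 : ℂ) * v 2 * (starRingEnd ℂ) (v 1) * Complex.I + (-1/6 : ℂ) * v 2 * (starRingEnd ℂ) (v 0) * Complex.I + (-1/6 : ℂ) * v 1 * (starRingEnd ℂ) (v 5) * Complex.I + (1/6 : ℂ) * v 1 * (starRingEnd ℂ) (v 3) * Complex.I + (1/6 : ℂ) * v 1 * (starRingEnd ℂ) (v 2) * Complex.I + (-1/6 : ℂ) * v 1 * (starRingEnd ℂ) (v 0) * Complex.I + (-1/6 : ℂ) * v 0 * (starRingEnd ℂ) (v 5) * Complex.I + (-1/6 : ℂ) * v 0 * (starRingEnd ℂ) (v 4) * Complex.I + (1/6 : ℂ) * v 0 * (starRingEnd ℂ)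 (v 2) * Complex.I + (1/6 : ℂ) * v 0 * (starRingEnd ℂ) (v 1) * Complex.I) * hs3

lemma bridge2 (v : Fin 6 → ℂ) :
    6 * Real.sqrt 3 * (‖(ξ6 v 2)‖ ^ 2 - ‖(ξ6 v 4)‖ ^ 2)
      = T16 v - T26 v := by
  apply Complex.ofReal_injective
  rw [show ((6 * Real.sqrt 3 * (‖(ξ6 v 2)‖ ^ 2 - ‖(ξ6 v 4)‖ ^ 2) : ℝ) : ℂ)
      = 6 * ((Real.sqrt 3 : ℝ) : ℂ) * ((ξ6 v 2) * (starRingEnd ℂ) (ξ6 v 2)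
        - (ξ6 v 4) * (starRingEnd ℂ) (ξ6 v 4)) from by
    rw [Complex.ofReal_mul, Complex.ofReal_mul, Complex.ofReal_sub, habs, habs]; norm_num]
  rw [Complex.ofReal_sub, T16, T26, Fin.sum_univ_six, Fin.sum_univ_six]
  push_cast [him]
  rw [xi2_val, xi4_val]
  simp only [Fin.reduceAdd, map_add, map_sub, map_neg, map_div₀, map_mul, map_one,
    map_ofNat, Complex.conj_conj, Complex.conj_I, Complex.conj_ofReal]
  linear_combination ((-1/6 : ℂ) * v 5 * (starRingEnd ℂ) (v 4) * Complex.I + (1/6 : ℂ) * v 5 * (starRingEnd ℂ) (v 3) * Complex.I + (-1/6 : ℂ) * v 5 * (starRingEnd ℂ) (v 1) * Complex.I + (1/6 : ℂ) * v 5 * (starRingEnd ℂ) (v 0) * Complex.I + (1/6 : ℂ) * v 4 * (starRingEnd ℂ) (v 5) * Complex.I + (-1/6 : ℂ) * v 4 * (starRingEnd ℂ) (v 3) * Complex.I + (1/6 : ℂ) * v 4 * (starRingEnd ℂ) (v 2) * Complex.I + (-1/6 : ℂ) * v 4 * (starRingEnd ℂ) (v 0) * Complex.I + (-1/6 : ℂ)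 * v 3 * (starRingEnd ℂ) (v 5) * Complex.I + (1/6 : ℂ) * v 3 * (starRingEnd ℂ) (v 4) * Complex.I + (-1/6 : ℂ) * v 3 * (starRingEnd ℂ) (v 2) * Complex.I + (1/6 : ℂ) * v 3 * (starRingEnd ℂ) (v 1) * Complex.I + (-1/6 : ℂ) * v 2 * (starRingEnd ℂ) (v 4) * Complex.I + (1/6 : ℂ) * v 2 * (starRingEnd ℂ) (v 3) * Complex.I + (-1/6 : ℂ) * v 2 * (starRingEnd ℂ) (v 1) * Complex.I + (1/6 : ℂ) * v 2 * (starRingEnd ℂ) (v 0) * Complex.I + (1/6 : ℂ) * v 1 * (starRingEnd ℂ) (v 5) * Complex.I + (-1/6 : ℂ) * v 1 * (starRingEnd ℂ) (v 3) * Complex.I + (1/6 : ℂ) * v 1 * (starRingEnd ℂ) (v 2) * Complex.I + (-1/6 : ℂ) * v 1 * (starRingEnd ℂ) (v 0) * Complex.I + (-1/6 : ℂ) * v 0 * (starRingEnd ℂ) (v 5) * Complex.I + (1/6 : ℂ) * v 0 * (starRingEnd ℂ) (v 4) * Complex.I + (-1/6 : ℂ) * v 0 * (starRingEnd ℂ)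 (v 2) * Complex.I + (1/6 : ℂ) * v 0 * (starRingEnd ℂ) (v 1) * Complex.I) * hs3

lemma A6_eq (v : Fin 6 → ℂ) : A6 v = T16 v / 2 := by
  rw [A6, T16]; ring

theorem centroid_fourier_formula (v : Fin 6 → ℂ)
    (h0 : ξ6 v 0 = 0) (h3 : ξ6 v 3 = 0) (n : ℕ)
    (hd : ‖(ξ6 v 1)‖ ^ 2 - ‖(ξ6 v 5)‖ ^ 2
        + ((3 : ℝ) ^ n)⁻¹ * (‖(ξ6 v 2)‖ ^ 2 - ‖(ξ6 v 4)‖ ^ 2) ≠ 0) :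
    G6 (M6^[n] v) = (1 / 2 ^ n : ℂ) *
      ((9 * Real.sqrt 3 *
          (‖(ξ6 v 1)‖ ^ 2 - ‖(ξ6 v 5)‖ ^ 2
            + ((3 : ℝ) ^ n)⁻¹ * (‖(ξ6 v 2)‖ ^ 2 - ‖(ξ6 v 4)‖ ^ 2)) : ℝ)
        : ℂ)⁻¹ * Z6 v := by

  -- extract the linear constraints
  have hsum : v 0 + v 1 + v 2 + v 3 + v 4 + v 5 = 0 := by
    have h := h0; rw [xi0_val] at h; linear_combination 6 * h
  have halt : v 0 - v 1 + v 2 - v 3 + v 4 - v 5 = 0 := by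
    have h := h3; rw [xi3_val] at h; linear_combination 6 * h
  have hv4 : v 4 = -v 0 - v 2 := by linear_combination (1/2) * hsum + (1/2) * halt
  have hv5 : v 5 = -v 1 - v 3 := by linear_combination (1/2) * hsum - (1/2) * halt
  -- iterated invariants
  have HC : ∀ m : ℕ, ((M6^[m] v) 4 = -((M6^[m] v) 0) - (M6^[m] v) 2
      ∧ (M6^[m] v) 5 = -((M6^[m] v) 1) - (M6^[m] v) 3)
      ∧ Z6 (M6^[m] v) = (3/8 : ℂ)^m * Z6 v := by
    intro m
    induction m with
    | zero => exact ⟨⟨hv4, hv5⟩, by simp⟩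
    | succ k ih =>
      obtain ⟨⟨i4, i5⟩, iZ⟩ := ih
      rw [Function.iterate_succ_apply']
      exact ⟨⟨c4_step _ i4 i5, c5_step _ i4 i5⟩,
        by rw [Z_step _ i4 i5, iZ]; ring⟩
  have HS : ∀ m : ℕ, T16 (M6^[m] v) + T26 (M6^[m] v) = (3/4 : ℝ)^m * (T16 v + T26 v) := by
    intro m
    induction m with
    | zero => simp
    | succ k ih =>
      rw [Function.iterate_succ_apply', T1_step, T2_step]
      rw [pow_succ]; linarith
  have HD : ∀ m : ℕ, T16 (M6^[m] v) - T26 (M6^[m] v) = (1/4 : ℝ)^m * (T16 v - T26 v) := by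
    intro m
    induction m with
    | zero => simp
    | succ k ih =>
      rw [Function.iterate_succ_apply', T1_step, T2_step]
      rw [pow_succ]; linarith
  set a : ℝ := ‖(ξ6 v 1)‖ ^ 2 - ‖(ξ6 v 5)‖ ^ 2 with ha
  set b : ℝ := ‖(ξ6 v 2)‖ ^ 2 - ‖(ξ6 v 4)‖ ^ 2 with hb
  set D : ℝ := a + ((3:ℝ)^n)⁻¹ * b with hD
  clear_value a b D
  have hb1 : T16 v + T26 v = 6 * Real.sqrt 3 * a := by rw [ha]; exact (bridge1 v).symm
  have hb2 : T16 v - T26 v = 6 * Real.sqrt 3 * b := by rw [hb]; exact (bridge2 v).symm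
  have hq : (1/4 : ℝ)^n = (3/4 : ℝ)^n * ((3:ℝ)^n)⁻¹ := by
    rw [← inv_pow, ← mul_pow]; norm_num
  have hT1n : T16 (M6^[n] v) = 3 * Real.sqrt 3 * (3/4 : ℝ)^n * D := by
    have h1 := HS n
    have h2 := HD n
    have h3' : T16 (M6^[n] v)
        = ((3/4 : ℝ)^n * (T16 v + T26 v) + (1/4 : ℝ)^n * (T16 v - T26 v)) / 2 := by
      linarith
    rw [h3', hb1, hb2, hq, hD]; ring
  have hAv : A6 (M6^[n] v) = 3/2 * Real.sqrt 3 * (3/4 : ℝ)^n * D := by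
    rw [A6_eq, hT1n]; ring
  have hs0 : Real.sqrt 3 ≠ 0 := by positivity
  have hsC : ((Real.sqrt 3 : ℝ) : ℂ) ≠ 0 := Complex.ofReal_ne_zero.mpr hs0
  have hDC : ((D : ℝ) : ℂ) ≠ 0 := Complex.ofReal_ne_zero.mpr hd
  have h34 : ((3:ℂ)/4)^n ≠ 0 := pow_ne_zero _ (by norm_num)
  have h2n : (2:ℂ)^n ≠ 0 := pow_ne_zero _ (by norm_num)
  have e1 : ((3/2 * Real.sqrt 3 * (3/4 : ℝ)^n * D : ℝ) : ℂ)
      = 3/2 * ((Real.sqrt 3 : ℝ) : ℂ) * ((3:ℂ)/4)^n * ((D : ℝ) : ℂ) := by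
    push_cast; ring
  have e2 : ((9 * Real.sqrt 3 * D : ℝ) : ℂ)
      = 9 * ((Real.sqrt 3 : ℝ) : ℂ) * ((D : ℝ) : ℂ) := by
    push_cast; ring
  rw [G6, (HC n).2, hAv, e1, e2]
  rw [show (3/8 : ℂ) = (3/4) / 2 by norm_num, div_pow]
  field_simp
  ring
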